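/- Let C be a strict monoidal category and T a strong twine on C. Then T is a twine, i.e. T satisfies (T_{X⊗Y,Z}⊗id_T)(id_X⊗T_{Y,Z}⁻¹⊗id_T)(id_X⊗T_{Y,Z⊗T}) = (id_X⊗T_{Y,Z⊗T})(id_X⊗T_{Y,Z}⁻¹⊗id_T)(T_{X⊗Y,Z}⊗id_T); hence every strongly entwined category is entwined. -/

import Mathlib

open CategoryTheory MonoidalCategory

universe v u

/-- A monoidal category is strict when the associators and unitors are `eqToHom`s of
equalities of objects. -/
structure MonStrict (C : Type u) [Category.{v} C] [MonoidalCategory C] : Prop where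
  assocObj : ∀ X Y Z : C, (X ⊗ Y) ⊗ Z = X ⊗ (Y ⊗ Z)
  lidObj : ∀ X : C, 𝟙_ C ⊗ X = X
  ridObj : ∀ X : C, X ⊗ 𝟙_ C = X
  assocHom : ∀ X Y Z : C, (α_ X Y Z).hom = eqToHom (assocObj X Y Z)
  lidHom : ∀ X : C, (λ_ X).hom = eqToHom (lidObj X)
  ridHom : ∀ X : C, (ρ_ X).hom = eqToHom (ridObj X)

variable {C : Type u} [Category.{v} C] [MonoidalCategory C]

/-- Transport of an endomorphism along an equality of objects of a strict monoidal
category. -/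
def cE {X Y : C} (h : X = Y) (f : Y ⟶ Y) : X ⟶ X := eqToHom h ≫ f ≫ eqToHom h.symm

/-- A pure-braided structure on a strict monoidal category: two families of natural
isomorphisms `A, B : U ⊗ V ⊗ W ≅ U ⊗ V ⊗ W` satisfying the pure-braided axioms. -/
structure PureBraided (C : Type u) [Category.{v} C] [MonoidalCategory C]
    (hS : MonStrict C) where
  A : ∀ U V W : C, U ⊗ (V ⊗ W) ≅ U ⊗ (V ⊗ W)
  B : ∀ U V W : C, U ⊗ (V ⊗ W) ≅ U ⊗ (V ⊗ W)
  natA : ∀ {U V W U' V' W' : C} (f : U ⟶ U') (g : V ⟶ V') (h : W ⟶ W'),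
    (f ⊗ₘ (g ⊗ₘ h)) ≫ (A U' V' W').hom = (A U V W).hom ≫ (f ⊗ₘ (g ⊗ₘ h))
  natB : ∀ {U V W U' V' W' : C} (f : U ⟶ U') (g : V ⟶ V') (h : W ⟶ W'),
    (f ⊗ₘ (g ⊗ₘ h)) ≫ (B U' V' W').hom = (B U V W).hom ≫ (f ⊗ₘ (g ⊗ₘ h))
  /-- `A_{U⊗V,W,X} = A_{U,V⊗W,X}(id_U ⊗ A_{V,W,X})` -/
  a1 : ∀ U V W X : C, (A (U ⊗ V) W X).hom =
    cE (by simp [hS.assocObj]) ((𝟙 U ⊗ₘ (A V W X).hom) ≫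
      cE (by simp [hS.assocObj]) (A U (V ⊗ W) X).hom)
  /-- `A_{U,V,W⊗X} = (A_{U,V,W} ⊗ id_X) A_{U,V⊗W,X}` -/
  a2 : ∀ U V W X : C, (A U V (W ⊗ X)).hom =
    cE (by simp [hS.assocObj]) ((cE (by simp [hS.assocObj]) (A U (V ⊗ W) X).hom) ≫
      ((A U V W).hom ⊗ₘ 𝟙 X))
  /-- `B_{U⊗V,W,X} = (id_U ⊗ B_{V,W,X}) B_{U,V⊗W,X}` -/
  baba : ∀ U V W X : C, (B (U ⊗ V) W X).hom =
    cE (by simp [hS.assocObj]) ((cE (by simp [hS.assocObj]) (B U (V ⊗ W) X).hom) ≫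
      (𝟙 U ⊗ₘ (B V W X).hom))
  /-- `B_{U,V,W⊗X} = B_{U,V⊗W,X}(B_{U,V,W} ⊗ id_X)` -/
  b2 : ∀ U V W X : C, (B U V (W ⊗ X)).hom =
    cE (by simp [hS.assocObj]) (((B U V W).hom ⊗ₘ 𝟙 X) ≫
      cE (by simp [hS.assocObj]) (B U (V ⊗ W) X).hom)
  /-- `(A_{U,V,W} ⊗ id_X)(id_U ⊗ B_{V,W,X}) = (id_U ⊗ B_{V,W,X})(A_{U,V,W} ⊗ id_X)` -/
  cab : ∀ U V W X : C,
    cE (by simp [hS.assocObj]) (𝟙 U ⊗ₘ (B V W X).hom) ≫ ((A U V W).hom ⊗ₘ 𝟙 X)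
    = ((A U V W).hom ⊗ₘ 𝟙 X) ≫ cE (by simp [hS.assocObj]) (𝟙 U ⊗ₘ (B V W X).hom)
  /-- `A_{U,I,V} = B_{U,I,V}` -/
  t1t : ∀ U V : C, A U (𝟙_ C) V = B U (𝟙_ C) V

/-- A twine on a strict monoidal category. -/
structure Twine (C : Type u) [Category.{v} C] [MonoidalCategory C]
    (hS : MonStrict C) where
  D : ∀ X Y : C, X ⊗ Y ≅ X ⊗ Y
  nat : ∀ {X Y X' Y' : C} (f : X ⟶ X') (g : Y ⟶ Y'),
    (f ⊗ₘ g) ≫ (D X' Y').hom = (D X Y).hom ≫ (f ⊗ₘ g)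
  unit : (D (𝟙_ C) (𝟙_ C)).hom = 𝟙 (𝟙_ C ⊗ 𝟙_ C)
  /-- `(D_{X,Y} ⊗ id_Z) D_{X⊗Y,Z} = (id_X ⊗ D_{Y,Z}) D_{X,Y⊗Z}` -/
  fus : ∀ X Y Z : C, (D (X ⊗ Y) Z).hom ≫ ((D X Y).hom ⊗ₘ 𝟙 Z)
    = cE (by simp [hS.assocObj]) ((D X (Y ⊗ Z)).hom ≫ (𝟙 X ⊗ₘ (D Y Z).hom))
  /-- the entwining axiom -/
  ent : ∀ X Y Z T : C,
    cE (by simp [hS.assocObj]) (𝟙 X ⊗ₘ (D Y (Z ⊗ T)).hom) ≫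
      cE (by simp [hS.assocObj]) (𝟙 X ⊗ₘ ((D Y Z).inv ⊗ₘ 𝟙 T)) ≫
        ((D (X ⊗ Y) Z).hom ⊗ₘ 𝟙 T)
    = ((D (X ⊗ Y) Z).hom ⊗ₘ 𝟙 T) ≫
        cE (by simp [hS.assocObj]) (𝟙 X ⊗ₘ ((D Y Z).inv ⊗ₘ 𝟙 T)) ≫
          cE (by simp [hS.assocObj]) (𝟙 X ⊗ₘ (D Y (Z ⊗ T)).hom)

/-- A strong twine on a strict monoidal category. -/
structure StrongTwine (C : Type u) [Category.{v} C] [MonoidalCategory C]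
    (hS : MonStrict C) where
  D : ∀ X Y : C, X ⊗ Y ≅ X ⊗ Y
  nat : ∀ {X Y X' Y' : C} (f : X ⟶ X') (g : Y ⟶ Y'),
    (f ⊗ₘ g) ≫ (D X' Y').hom = (D X Y).hom ≫ (f ⊗ₘ g)
  unit : (D (𝟙_ C) (𝟙_ C)).hom = 𝟙 (𝟙_ C ⊗ 𝟙_ C)
  /-- `(T_{U,V} ⊗ id_W) T_{U⊗V,W} = (id_U ⊗ T_{V,W}) T_{U,V⊗W}` -/
  fus : ∀ X Y Z : C, (D (X ⊗ Y) Z).hom ≫ ((D X Y).hom ⊗ₘ 𝟙 Z)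
    = cE (by simp [hS.assocObj]) ((D X (Y ⊗ Z)).hom ≫ (𝟙 X ⊗ₘ (D Y Z).hom))
  /-- `(T_{U,V} ⊗ id_W)(id_U ⊗ T_{V,W}) = (id_U ⊗ T_{V,W})(T_{U,V} ⊗ id_W)` -/
  comm : ∀ X Y Z : C,
    cE (by simp [hS.assocObj]) (𝟙 X ⊗ₘ (D Y Z).hom) ≫ ((D X Y).hom ⊗ₘ 𝟙 Z)
    = ((D X Y).hom ⊗ₘ 𝟙 Z) ≫ cE (by simp [hS.assocObj]) (𝟙 X ⊗ₘ (D Y Z).hom)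

/-- A D-structure (consisting of isomorphisms) on a strict monoidal category. -/
structure DStructure (C : Type u) [Category.{v} C] [MonoidalCategory C]
    (hS : MonStrict C) where
  R : ∀ X : C, X ≅ X
  nat : ∀ {X Y : C} (f : X ⟶ Y), f ≫ (R Y).hom = (R X).hom ≫ f
  unit : (R (𝟙_ C)).hom = 𝟙 (𝟙_ C)
  /-- `(R_{X⊗Y} ⊗ id_Z)(id_X ⊗ R_{Y⊗Z}) = (id_X ⊗ R_{Y⊗Z})(R_{X⊗Y} ⊗ id_Z)` -/
  comm : ∀ X Y Z : C,
    cE (by simp [hS.assocObj]) (𝟙 X ⊗ₘ (R (Y ⊗ Z)).hom) ≫ ((R (X ⊗ Y)).hom ⊗ₘ 𝟙 Z)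
    = ((R (X ⊗ Y)).hom ⊗ₘ 𝟙 Z) ≫ cE (by simp [hS.assocObj]) (𝟙 X ⊗ₘ (R (Y ⊗ Z)).hom)


/-! In the group of automorphisms of `((X ⊗ Y) ⊗ Z) ⊗ W`, with product the composition of maps,
consider `a = T_{X,Y} ⊗ 𝟙 ⊗ 𝟙`, `b = 𝟙 ⊗ T_{Y,Z} ⊗ 𝟙`, `c = 𝟙 ⊗ 𝟙 ⊗ T_{Z,W}`, `p = T_{X,Y⊗Z} ⊗ 𝟙`,
`q = 𝟙 ⊗ T_{Y,Z⊗W}`, `r = T_{X⊗Y,Z} ⊗ 𝟙` and `s = 𝟙 ⊗ T_{Y⊗Z,W}`. The fusion axiom, tensored with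
identities, gives `a r = b p` and `b s = c q`; the commutation axiom, naturality and the interchange
law make enough of these seven automorphisms commute. The entwining relation `r b⁻¹ q = q b⁻¹ r` is
then a computation in a group: `b⁻¹ q = c⁻¹ s`, and `c⁻¹ s` commutes with `r`. -/

theorem entwining_of_fusion {G : Type*} [Group G] {a b c p q r s : G}
    (hr : a * r = b * p) (hs : b * s = c * q)
    (hab : Commute a b) (hac : Commute a c) (hbc : Commute b c) (hbs : Commute b s)
    (haq : Commute a q) (hcr : Commute c r) (hps : Commute p s) :
    r * b⁻¹ * q = q * b⁻¹ * r := by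
  have has : Commute a s := by
    rw [eq_inv_mul_of_mul_eq hs]
    exact hab.inv_right.mul_right (hac.mul_right haq)
  have hrs : Commute r s := by
    rw [eq_inv_mul_of_mul_eq hr]
    exact has.inv_left.mul_left (hbs.mul_left hps)
  have hq : q = c⁻¹ * (b * s) := eq_inv_mul_of_mul_eq hs.symm
  have hbq : Commute b q := by
    rw [hq]
    exact hbc.inv_right.mul_right ((Commute.refl b).mul_right hbs)
  have hbq' : b⁻¹ * q = c⁻¹ * s := by
    rw [hq, ← mul_assoc, hbc.inv_inv.eq, mul_assoc, inv_mul_cancel_left]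
  calc r * b⁻¹ * q = r * (c⁻¹ * s) := by rw [mul_assoc, hbq']
    _ = c⁻¹ * s * r := by
      rw [← mul_assoc, ← hcr.inv_left.eq, mul_assoc, hrs.eq, mul_assoc]
    _ = q * b⁻¹ * r := by rw [← hbq', hbq.inv_left.eq]

section Transport

variable {𝒟 : Type*} [Category 𝒟]

lemma CategoryTheory.Aut.mul_hom {M : 𝒟} (f g : Aut M) : (f * g).hom = g.hom ≫ f.hom := rfl

lemma CategoryTheory.Aut.commute_iff_hom {M : 𝒟} {f g : Aut M} :
    Commute f g ↔ g.hom ≫ f.hom = f.hom ≫ g.hom :=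
  ⟨congrArg Iso.hom, fun h => Aut.ext h⟩

lemma cE_comp {X Y : 𝒟} (h : X = Y) (f g : Y ⟶ Y) : cE h f ≫ cE h g = cE h (f ≫ g) := by
  subst h; simp [cE]

lemma cE_cE {X Y Z : 𝒟} (h : X = Y) (h' : Y = Z) (f : Z ⟶ Z) :
    cE h (cE h' f) = cE (h.trans h') f := by
  subst h h'; simp [cE]

def cEIso {X Y : 𝒟} (h : X = Y) (f : Y ≅ Y) : Aut X where
  hom := cE h f.hom
  inv := cE h f.inv
  hom_inv_id := by subst h; simp [cE]
  inv_hom_id := by subst h; simp [cE]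

end Transport

lemma cE_tensorHom_id {A B : C} (h : A = B) (W : C) (f : B ⟶ B) :
    cE h f ⊗ₘ 𝟙 W = cE (congrArg (· ⊗ W) h) (f ⊗ₘ 𝟙 W) := by
  subst h; simp [cE]

lemma id_tensorHom_cE {A B : C} (h : A = B) (W : C) (f : B ⟶ B) :
    𝟙 W ⊗ₘ cE h f = cE (congrArg (W ⊗ ·) h) (𝟙 W ⊗ₘ f) := by
  subst h; simp [cE]

lemma MonStrict.tensorHom_assoc (hS : MonStrict C) {X Y Z : C} (f : X ⟶ X) (g : Y ⟶ Y)
    (h : Z ⟶ Z) : (f ⊗ₘ g) ⊗ₘ h = cE (hS.assocObj X Y Z) (f ⊗ₘ (g ⊗ₘ h)) := by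
  rw [cE, ← hS.assocHom, ← associator_naturality_assoc, hS.assocHom, eqToHom_trans,
    eqToHom_refl, Category.comp_id]

lemma MonStrict.cE_tensorHom_assoc (hS : MonStrict C) {A X Y Z : C} (h : A = (X ⊗ Y) ⊗ Z)
    (f : X ⟶ X) (g : Y ⟶ Y) (k : Z ⟶ Z) :
    cE h ((f ⊗ₘ g) ⊗ₘ k) = cE (h.trans (hS.assocObj X Y Z)) (f ⊗ₘ (g ⊗ₘ k)) := by
  rw [hS.tensorHom_assoc, cE_cE]

namespace StrongTwine

variable {hS : MonStrict C} (T : StrongTwine C hS) (X Y Z W : C)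

/-- `tij` is `T` acting on the `i`-th and `j`-th of the four factors, `t12_3` is `T_{X⊗Y,Z} ⊗ 𝟙`,
`t1_23` is `T_{X,Y⊗Z} ⊗ 𝟙`, and so on. -/
def t12 : Aut (((X ⊗ Y) ⊗ Z) ⊗ W) := (T.D X Y ⊗ᵢ Iso.refl Z) ⊗ᵢ Iso.refl W

def t23 : Aut (((X ⊗ Y) ⊗ Z) ⊗ W) :=
  cEIso (by simp only [hS.assocObj]) (Iso.refl X ⊗ᵢ (T.D Y Z ⊗ᵢ Iso.refl W))

def t34 : Aut (((X ⊗ Y) ⊗ Z) ⊗ W) := cEIso (hS.assocObj _ _ _) (Iso.refl (X ⊗ Y) ⊗ᵢ T.D Z W)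

def t12_3 : Aut (((X ⊗ Y) ⊗ Z) ⊗ W) := T.D (X ⊗ Y) Z ⊗ᵢ Iso.refl W

def t1_23 : Aut (((X ⊗ Y) ⊗ Z) ⊗ W) :=
  cEIso (by simp only [hS.assocObj]) (T.D X (Y ⊗ Z) ⊗ᵢ Iso.refl W)

def t2_34 : Aut (((X ⊗ Y) ⊗ Z) ⊗ W) :=
  cEIso (by simp only [hS.assocObj]) (Iso.refl X ⊗ᵢ T.D Y (Z ⊗ W))

def t23_4 : Aut (((X ⊗ Y) ⊗ Z) ⊗ W) :=
  cEIso (by simp only [hS.assocObj]) (Iso.refl X ⊗ᵢ T.D (Y ⊗ Z) W)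

lemma t12_hom : (T.t12 X Y Z W).hom = ((T.D X Y).hom ⊗ₘ 𝟙 Z) ⊗ₘ 𝟙 W := rfl

lemma t23_hom : (T.t23 X Y Z W).hom =
    cE (by simp only [hS.assocObj]) (𝟙 X ⊗ₘ ((T.D Y Z).hom ⊗ₘ 𝟙 W)) := rfl

lemma t34_hom : (T.t34 X Y Z W).hom = cE (hS.assocObj _ _ _) (𝟙 (X ⊗ Y) ⊗ₘ (T.D Z W).hom) := rfl

lemma t12_3_hom : (T.t12_3 X Y Z W).hom = (T.D (X ⊗ Y) Z).hom ⊗ₘ 𝟙 W := rfl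

lemma t1_23_hom : (T.t1_23 X Y Z W).hom =
    cE (by simp only [hS.assocObj]) ((T.D X (Y ⊗ Z)).hom ⊗ₘ 𝟙 W) := rfl

lemma t2_34_hom : (T.t2_34 X Y Z W).hom =
    cE (by simp only [hS.assocObj]) (𝟙 X ⊗ₘ (T.D Y (Z ⊗ W)).hom) := rfl

lemma t23_4_hom : (T.t23_4 X Y Z W).hom =
    cE (by simp only [hS.assocObj]) (𝟙 X ⊗ₘ (T.D (Y ⊗ Z) W).hom) := rfl

lemma t12_mul_t12_3 : T.t12 X Y Z W * T.t12_3 X Y Z W = T.t23 X Y Z W * T.t1_23 X Y Z W := by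
  refine Aut.ext ?_
  rw [Aut.mul_hom, Aut.mul_hom, t12_hom, t12_3_hom, t23_hom, t1_23_hom]
  have h := congrArg (· ⊗ₘ 𝟙 W) (T.fus X Y Z)
  rw [comp_tensor_id, cE_tensorHom_id, comp_tensor_id, ← cE_comp, hS.cE_tensorHom_assoc] at h
  exact h

lemma t23_mul_t23_4 : T.t23 X Y Z W * T.t23_4 X Y Z W = T.t34 X Y Z W * T.t2_34 X Y Z W := by
  refine Aut.ext ?_
  have e : ((X ⊗ Y) ⊗ Z) ⊗ W = X ⊗ ((Y ⊗ Z) ⊗ W) := by simp only [hS.assocObj]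
  have h := congrArg (fun f => cE e (𝟙 X ⊗ₘ f)) (T.fus Y Z W)
  simp only [id_tensor_comp, ← cE_comp, id_tensorHom_cE, cE_cE] at h
  rw [Aut.mul_hom, Aut.mul_hom, t23_hom, t23_4_hom, t34_hom, t2_34_hom, ← id_tensorHom_id X Y,
    hS.cE_tensorHom_assoc]
  exact h

lemma commute_t12_t23 : Commute (T.t12 X Y Z W) (T.t23 X Y Z W) := by
  have h := congrArg (· ⊗ₘ 𝟙 W) (T.comm X Y Z)
  rw [comp_tensor_id, comp_tensor_id, cE_tensorHom_id, hS.cE_tensorHom_assoc] at h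
  rw [Aut.commute_iff_hom, t12_hom, t23_hom]
  exact h

lemma commute_t12_t34 : Commute (T.t12 X Y Z W) (T.t34 X Y Z W) := by
  rw [Aut.commute_iff_hom, t12_hom, t34_hom, hS.tensorHom_assoc, id_tensorHom_id, cE_comp,
    cE_comp, id_tensorHom, tensorHom_id, whisker_exchange]

lemma commute_t23_t34 : Commute (T.t23 X Y Z W) (T.t34 X Y Z W) := by
  have e : ((X ⊗ Y) ⊗ Z) ⊗ W = X ⊗ ((Y ⊗ Z) ⊗ W) := by simp only [hS.assocObj]
  have h := congrArg (fun f => cE e (𝟙 X ⊗ₘ f)) (T.comm Y Z W)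
  simp only [id_tensor_comp, ← cE_comp, id_tensorHom_cE, cE_cE] at h
  rw [Aut.commute_iff_hom, t23_hom, t34_hom, ← id_tensorHom_id X Y, hS.cE_tensorHom_assoc]
  exact h

lemma commute_t23_t23_4 : Commute (T.t23 X Y Z W) (T.t23_4 X Y Z W) := by
  have e : ((X ⊗ Y) ⊗ Z) ⊗ W = X ⊗ ((Y ⊗ Z) ⊗ W) := by simp only [hS.assocObj]
  have h := congrArg (fun f => cE e (𝟙 X ⊗ₘ f)) (T.nat (T.D Y Z).hom (𝟙 W))
  simp only [id_tensor_comp, ← cE_comp] at h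
  rw [Aut.commute_iff_hom, t23_hom, t23_4_hom]
  exact h.symm

lemma commute_t12_t2_34 : Commute (T.t12 X Y Z W) (T.t2_34 X Y Z W) := by
  have h := congrArg (cE (hS.assocObj (X ⊗ Y) Z W)) (T.comm X Y (Z ⊗ W))
  simp only [← cE_comp, cE_cE] at h
  rw [Aut.commute_iff_hom, t12_hom, t2_34_hom, hS.tensorHom_assoc, id_tensorHom_id]
  exact h

lemma commute_t34_t12_3 : Commute (T.t34 X Y Z W) (T.t12_3 X Y Z W) := by
  rw [Aut.commute_iff_hom, t34_hom, t12_3_hom]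
  exact (T.comm (X ⊗ Y) Z W).symm

lemma commute_t1_23_t23_4 : Commute (T.t1_23 X Y Z W) (T.t23_4 X Y Z W) := by
  have h := congrArg (cE (congrArg (· ⊗ W) (hS.assocObj X Y Z))) (T.comm X (Y ⊗ Z) W)
  simp only [← cE_comp, cE_cE] at h
  rw [Aut.commute_iff_hom, t1_23_hom, t23_4_hom]
  exact h

end StrongTwine

/-- Every strong twine is a twine: a strongly entwined category is entwined. -/
theorem stmt14 (hS : MonStrict C) (T : StrongTwine C hS) :
    ∃ Tw : Twine C hS, Tw.D = T.D := by
  refine ⟨⟨T.D, T.nat, T.unit, T.fus, fun X Y Z W => ?_⟩, rfl⟩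
  exact congrArg Iso.hom (entwining_of_fusion (G := Aut _) (T.t12_mul_t12_3 X Y Z W)
    (T.t23_mul_t23_4 X Y Z W) (T.commute_t12_t23 X Y Z W) (T.commute_t12_t34 X Y Z W)
    (T.commute_t23_t34 X Y Z W) (T.commute_t23_t23_4 X Y Z W) (T.commute_t12_t2_34 X Y Z W)
    (T.commute_t34_t12_3 X Y Z W) (T.commute_t1_23_t23_4 X Y Z W))
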